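/- (Kernel expression of the empirical maximum mean discrepancy.) Let H be a real inner product space, X a set, and K : X → H a map; define the kernel k(x, y) := ⟨K(x), K(y)⟩. Let x₁, …, x_m and y₁, …, y_n be points of X with m, n ≥ 1. Then the supremum over all f ∈ H with ‖f‖ ≤ 1 of (1/m) Σ_{i=1}^m ⟨f, K(x_i)⟩ − (1/n) Σ_{j=1}^n ⟨f, K(y_j)⟩ equals [ (1/m²) Σ_{i₁,i₂=1}^m k(x_{i₁}, x_{i₂}) − (2/(mn)) Σ_{i=1}^m Σ_{j=1}^n k(x_i, y_j) + (1/n²) Σ_{j₁,j₂=1}^n k(y_{j₁}, y_{j₂}) ]^{1/2}. -/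

import Mathlib

/-!
Both sample averages are inner products with the empirical mean embeddings
`μ_x = (1/m) ∑ K(xᵢ)` and `μ_y = (1/n) ∑ K(yⱼ)`, so the objective is the linear functional
`f ↦ ⟪f, μ_x - μ_y⟫`. By Cauchy–Schwarz its supremum over the unit ball is `‖μ_x - μ_y‖`,
attained at the normalised vector, and expanding `‖μ_x - μ_y‖²` bilinearly gives the
kernel expression.
-/

open scoped RealInnerProductSpace

section

variable {H : Type*} [NormedAddCommGroup H] [InnerProductSpace ℝ H] {X : Type*}

theorem isGreatest_inner_image_unitBall (v : H) :
    IsGreatest ((fun f : H => ⟪f, v⟫) '' {f | ‖f‖ ≤ 1}) ‖v‖ := by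
  refine ⟨?_, ?_⟩
  · by_cases hv : v = 0
    · exact ⟨0, by simp, by simp [hv]⟩
    · refine ⟨‖v‖⁻¹ • v, by simp [norm_smul, hv], ?_⟩
      have hv' : ‖v‖ ≠ 0 := norm_ne_zero_iff.mpr hv
      simp only [real_inner_smul_left, real_inner_self_eq_norm_sq]
      field_simp
  · rintro _ ⟨f, hf, rfl⟩
    calc ⟪f, v⟫ ≤ ‖f‖ * ‖v‖ := real_inner_le_norm f v
      _ ≤ ‖v‖ := mul_le_of_le_one_left (norm_nonneg v) hf

theorem sSup_inner_image_unitBall (v : H) :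
    sSup ((fun f : H => ⟪f, v⟫) '' {f | ‖f‖ ≤ 1}) = ‖v‖ :=
  (isGreatest_inner_image_unitBall v).csSup_eq

noncomputable def empiricalMean (K : X → H) {m : ℕ} (x : Fin m → X) : H :=
  (1 / (m : ℝ)) • ∑ i, K (x i)

theorem inner_empiricalMean_right (K : X → H) {m : ℕ} (x : Fin m → X) (f : H) :
    ⟪f, empiricalMean K x⟫ = (1 / (m : ℝ)) * ∑ i, ⟪f, K (x i)⟫ := by
  rw [empiricalMean, real_inner_smul_right, inner_sum]

theorem inner_empiricalMean_empiricalMean (K : X → H) {m n : ℕ} (x : Fin m → X)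
    (y : Fin n → X) :
    ⟪empiricalMean K x, empiricalMean K y⟫
      = (1 / ((m : ℝ) * n)) * ∑ i, ∑ j, ⟪K (x i), K (y j)⟫ := by
  simp only [empiricalMean, real_inner_smul_left, real_inner_smul_right, sum_inner]
  simp only [inner_sum]
  ring

theorem norm_sub_empiricalMean_sq (K : X → H) {m n : ℕ} (x : Fin m → X) (y : Fin n → X) :
    ‖empiricalMean K x - empiricalMean K y‖ ^ 2
      = (1 / (m : ℝ) ^ 2) * ∑ i₁, ∑ i₂, ⟪K (x i₁), K (x i₂)⟫
        - (2 / ((m : ℝ) * n)) * ∑ i, ∑ j, ⟪K (x i), K (y j)⟫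
        + (1 / (n : ℝ) ^ 2) * ∑ j₁, ∑ j₂, ⟪K (y j₁), K (y j₂)⟫ := by
  rw [norm_sub_sq_real, ← real_inner_self_eq_norm_sq, ← real_inner_self_eq_norm_sq,
    inner_empiricalMean_empiricalMean, inner_empiricalMean_empiricalMean,
    inner_empiricalMean_empiricalMean]
  ring

end

theorem stmt15_general {H : Type*} [NormedAddCommGroup H] [InnerProductSpace ℝ H]
    {X : Type*} (K : X → H) (k : X → X → ℝ) (hk : ∀ p q, k p q = ⟪K p, K q⟫)
    (m n : ℕ) (x : Fin m → X) (y : Fin n → X) :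
    sSup ((fun f : H =>
        (1 / (m : ℝ)) * ∑ i, ⟪f, K (x i)⟫ - (1 / (n : ℝ)) * ∑ j, ⟪f, K (y j)⟫) ''
        {f : H | ‖f‖ ≤ 1})
      = Real.sqrt
          ((1 / (m : ℝ) ^ 2) * ∑ i₁, ∑ i₂, k (x i₁) (x i₂)
            - (2 / ((m : ℝ) * (n : ℝ))) * ∑ i, ∑ j, k (x i) (y j)
            + (1 / (n : ℝ) ^ 2) * ∑ j₁, ∑ j₂, k (y j₁) (y j₂)) := by
  have hobjective : (fun f : H =>
      (1 / (m : ℝ)) * ∑ i, ⟪f, K (x i)⟫ - (1 / (n : ℝ)) * ∑ j, ⟪f, K (y j)⟫)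
        = fun f => ⟪f, empiricalMean K x - empiricalMean K y⟫ := by
    funext f
    rw [inner_sub_right, inner_empiricalMean_right, inner_empiricalMean_right]
  simp only [hk]
  rw [hobjective, sSup_inner_image_unitBall, ← norm_sub_empiricalMean_sq,
    Real.sqrt_sq (norm_nonneg _)]

/-- Kernel expression of the empirical maximum mean discrepancy: for a map
`K : X → H` into a real inner product space with kernel `k(x,y) = ⟪K x, K y⟫`, and
samples `x₁, …, x_m`, `y₁, …, y_n`, the supremum over the unit ball `‖f‖ ≤ 1` of
`(1/m) ∑ᵢ ⟪f, K xᵢ⟫ - (1/n) ∑ⱼ ⟪f, K yⱼ⟫` equals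
`( (1/m²) ∑ k(xᵢ₁,xᵢ₂) - (2/(mn)) ∑ k(xᵢ,yⱼ) + (1/n²) ∑ k(yⱼ₁,yⱼ₂) )^{1/2}`. -/
theorem stmt15 {H : Type*} [NormedAddCommGroup H] [InnerProductSpace ℝ H]
    {X : Type*} (K : X → H) (k : X → X → ℝ) (hk : ∀ p q, k p q = ⟪K p, K q⟫)
    (m n : ℕ) (hm : 1 ≤ m) (hn : 1 ≤ n) (x : Fin m → X) (y : Fin n → X) :
    sSup ((fun f : H =>
        (1 / (m : ℝ)) * ∑ i, ⟪f, K (x i)⟫ - (1 / (n : ℝ)) * ∑ j, ⟪f, K (y j)⟫) ''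
        {f : H | ‖f‖ ≤ 1})
      = Real.sqrt
          ((1 / (m : ℝ) ^ 2) * ∑ i₁, ∑ i₂, k (x i₁) (x i₂)
            - (2 / ((m : ℝ) * (n : ℝ))) * ∑ i, ∑ j, k (x i) (y j)
            + (1 / (n : ℝ) ^ 2) * ∑ j₁, ∑ j₂, k (y j₁) (y j₂)) :=
  stmt15_general K k hk m n x y
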